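/- Let (E,M) be a factorization system on a finitely complete category C with terminal object 1, let f: X → Y be a morphism and y: 1 → Y a point. Then there exists a universal displacement from f to y (a point e: 1 → f*N_y of the total of the pullback Δ_f ν(y) with e ∈ E) if and only if there exist a point x: 1 → X and a colimiting cone λ: Δ_f ν(y) → ν(x) such that the image cone ∃_f λ: ∃_f(Δ_f ν(y)) → ν(f ∘ x) is also colimiting. -/

import Mathlib

open CategoryTheory CategoryTheory.Limits

universe v u

/-- `e ⊥ m`: every commutative square from `e` to `m` has a unique diagonal filler. -/
def IsOrth {C : Type u} [Category.{v} C] {A B M N : C} (e : A ⟶ B) (m : M ⟶ N) : Prop :=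
  ∀ (u : A ⟶ M) (v : B ⟶ N), e ≫ v = u ≫ m →
    ∃! w : B ⟶ M, e ≫ w = u ∧ w ≫ m = v

/-- `^⊥M`: the class of morphisms left-orthogonal to every morphism in `M`. -/
def leftOrth {C : Type u} [Category.{v} C] (M : MorphismProperty C) : MorphismProperty C :=
  fun _ _ e => ∀ ⦃M₀ N : C⦄ (m : M₀ ⟶ N), M m → IsOrth e m

/-- `E^⊥`: the class of morphisms right-orthogonal to every morphism in `E`. -/
def rightOrth {C : Type u} [Category.{v} C] (E : MorphismProperty C) : MorphismProperty C :=
  fun _ _ m => ∀ ⦃A B : C⦄ (e : A ⟶ B), E e → IsOrth e m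

/-- A pre-factorization system: a pair of classes `(E, M)` with `E = ^⊥M` and `M = E^⊥`. -/
structure PreFactorizationSystem (C : Type u) [Category.{v} C] where
  E : MorphismProperty C
  M : MorphismProperty C
  E_eq : E = leftOrth M
  M_eq : M = rightOrth E


/-- A factorization system with a chosen `(E,M)`-factorization `f = η f ≫ refl f` of every
morphism; `refl f` is the discrete reflection `↓f` of `f`. -/
structure FactorizationData (C : Type u) [Category.{v} C] extends PreFactorizationSystem C where
  mid : ∀ {A B : C}, (A ⟶ B) → C
  eta : ∀ {A B : C} (f : A ⟶ B), A ⟶ mid f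
  refl : ∀ {A B : C} (f : A ⟶ B), mid f ⟶ B
  eta_mem : ∀ {A B : C} (f : A ⟶ B), E (eta f)
  refl_mem : ∀ {A B : C} (f : A ⟶ B), M (refl f)
  fac : ∀ {A B : C} (f : A ⟶ B), eta f ≫ refl f = f

variable {C : Type u} [Category.{v} C]

/-- A cone with base `m : M₀ ⟶ X` and vertex the point `x : 1 ⟶ X` is a morphism
`lam : m ⟶ ν(x)` over `X`, where `ν(x) = ↓x` is the neighborhood of `x`. -/
def IsCone [HasTerminal C] (D : FactorizationData C) {M₀ X : C} (m : M₀ ⟶ X)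
    (x : ⊤_ C ⟶ X) (lam : M₀ ⟶ D.mid x) : Prop :=
  lam ≫ D.refl x = m

/-- A cone `lam : m ⟶ ν(x)` is colimiting if every cone `mu : m ⟶ ν(y)` factors uniquely
through it via a morphism `ν(x) ⟶ ν(y)` over `X`; then `x` is the colimit of `m`. -/
def IsColimiting [HasTerminal C] (D : FactorizationData C) {M₀ X : C} (m : M₀ ⟶ X)
    (x : ⊤_ C ⟶ X) (lam : M₀ ⟶ D.mid x) : Prop :=
  ∀ (y : ⊤_ C ⟶ X) (mu : M₀ ⟶ D.mid y), IsCone D m y mu →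
    ∃! θ : D.mid x ⟶ D.mid y, θ ≫ D.refl y = D.refl x ∧ lam ≫ θ = mu

/-- The unique diagonal filler of a square from a morphism in `E` to a morphism in `M`. -/
noncomputable def fill (D : FactorizationData C) {A B M₀ N : C} {e : A ⟶ B} {m : M₀ ⟶ N}
    (he : D.E e) (hm : D.M m) (u : A ⟶ M₀) (v : B ⟶ N) (h : e ≫ v = u ≫ m) : B ⟶ M₀ :=
  (((D.E_eq ▸ he : leftOrth D.M e) m hm u v h).exists).choose

lemma fill_spec (D : FactorizationData C) {A B M₀ N : C} {e : A ⟶ B} {m : M₀ ⟶ N}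
    (he : D.E e) (hm : D.M m) (u : A ⟶ M₀) (v : B ⟶ N) (h : e ≫ v = u ≫ m) :
    e ≫ fill D he hm u v h = u ∧ fill D he hm u v h ≫ m = v :=
  (((D.E_eq ▸ he : leftOrth D.M e) m hm u v h).exists).choose_spec

/-- The canonical comparison `∃_f ν(x) ≅ ν(f ∘ x)`: the map `↓x ⟶ ↓(f ∘ x)` over `f`. -/
noncomputable def canMap (D : FactorizationData C) {A X Y : C} (x : A ⟶ X) (f : X ⟶ Y) :
    D.mid x ⟶ D.mid (x ≫ f) :=
  fill D (D.eta_mem x) (D.refl_mem (x ≫ f)) (D.eta (x ≫ f)) (D.refl x ≫ f)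
    (by rw [← Category.assoc, D.fac, D.fac])

lemma canMap_comm (D : FactorizationData C) {A X Y : C} (x : A ⟶ X) (f : X ⟶ Y) :
    canMap D x f ≫ D.refl (x ≫ f) = D.refl x ≫ f :=
  (fill_spec D _ _ _ _ _).2

/-- The image cone `∃_f lam : ∃_f m ⟶ ν(f ∘ x)` of a cone `lam : m ⟶ ν(x)` along `f : X ⟶ Y`,
where `∃_f m = ↓(f ∘ m)`; it is obtained by functoriality of the reflection `↓(f ∘ -)` and the
canonical isomorphism `∃_f ν(x) ≅ ν(f ∘ x)`. -/
noncomputable def imageCone [HasTerminal C] (D : FactorizationData C) {M₀ X Y : C}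
    (f : X ⟶ Y) (m : M₀ ⟶ X) (x : ⊤_ C ⟶ X) (lam : M₀ ⟶ D.mid x)
    (hc : IsCone D m x lam) : D.mid (m ≫ f) ⟶ D.mid (x ≫ f) :=
  fill D (D.eta_mem (m ≫ f)) (D.refl_mem (x ≫ f)) (lam ≫ canMap D x f) (D.refl (m ≫ f))
    (by rw [D.fac, Category.assoc, canMap_comm, ← Category.assoc, hc])

/-!
A point `e ∈ E` of `P = f*N_y` makes `e ≫ η` an `E`-map, so for `x = e ≫ fst` the reflections
`↓fst` and `↓(fst ≫ f)` are, up to the canonical comparison, the neighborhoods `ν(x)` and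
`ν(x ≫ f)`; cones that are isomorphisms are colimiting. Conversely, the tautological cone
`↓(fst ≫ f) ⟶ ν(y)` over `Y` factors through the colimiting image cone, which yields a map
`ν(x) ⟶ P` over `X`; it is inverse to `λ` by the universal property of `λ`, and
`η_x` followed by it is a point of `P` in `E`.
-/

namespace FactorizationData

variable (D : FactorizationData C)

lemma isOrth {A B M₀ N : C} {e : A ⟶ B} {m : M₀ ⟶ N} (he : D.E e) (hm : D.M m) :
    IsOrth e m :=
  (D.E_eq ▸ he : leftOrth D.M e) m hm

lemma diag_ext {A B M₀ N : C} {e : A ⟶ B} {m : M₀ ⟶ N} (he : D.E e) (hm : D.M m)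
    {w₁ w₂ : B ⟶ M₀} (h₁ : e ≫ w₁ = e ≫ w₂) (h₂ : w₁ ≫ m = w₂ ≫ m) : w₁ = w₂ :=
  (D.isOrth he hm (e ≫ w₁) (w₁ ≫ m) (Category.assoc _ _ _).symm).unique ⟨rfl, rfl⟩
    ⟨h₁.symm, h₂.symm⟩

lemma E_comp {A B B' : C} {a : A ⟶ B} {b : B ⟶ B'} (ha : D.E a) (hb : D.E b) :
    D.E (a ≫ b) := by
  rw [D.E_eq]
  intro M₀ N m hm u v hsq
  obtain ⟨w₁, ⟨hw₁u, hw₁v⟩, hw₁⟩ :=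
    D.isOrth ha hm u (b ≫ v) (by rw [← Category.assoc, hsq])
  obtain ⟨w₂, ⟨hw₂u, hw₂v⟩, hw₂⟩ := D.isOrth hb hm w₁ v hw₁v.symm
  refine ⟨w₂, ⟨by rw [Category.assoc, hw₂u, hw₁u], hw₂v⟩, fun w hw => hw₂ w ⟨?_, hw.2⟩⟩
  exact hw₁ (b ≫ w) ⟨by rw [← Category.assoc, hw.1], by rw [Category.assoc, hw.2]⟩

lemma E_of_isIso {A B : C} (k : A ⟶ B) [IsIso k] : D.E k := by
  rw [D.E_eq]
  intro M₀ N m hm u v hsq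
  refine ⟨inv k ≫ u, ⟨by simp, by rw [Category.assoc, ← hsq, IsIso.inv_hom_id_assoc]⟩, ?_⟩
  intro w hw
  rw [← hw.1, IsIso.inv_hom_id_assoc]

lemma isIso_of_fac {A B P Q : C} {e₁ : A ⟶ P} {m₁ : P ⟶ B} {e₂ : A ⟶ Q} {m₂ : Q ⟶ B}
    (he₁ : D.E e₁) (hm₁ : D.M m₁) (he₂ : D.E e₂) (hm₂ : D.M m₂)
    {φ : P ⟶ Q} (h₁ : e₁ ≫ φ = e₂) (h₂ : φ ≫ m₂ = m₁) : IsIso φ := by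
  have hsq : e₂ ≫ m₂ = e₁ ≫ m₁ := by rw [← h₁, Category.assoc, h₂]
  obtain ⟨h₃, h₄⟩ := fill_spec D he₂ hm₁ e₁ m₂ hsq
  refine ⟨fill D he₂ hm₁ e₁ m₂ hsq, ?_, ?_⟩
  · exact D.diag_ext he₁ hm₁ (by rw [reassoc_of% h₁, h₃, Category.comp_id])
      (by rw [Category.assoc, h₄, h₂, Category.id_comp])
  · exact D.diag_ext he₂ hm₂ (by rw [reassoc_of% h₃, h₁, Category.comp_id])
      (by rw [Category.assoc, h₂, h₄, Category.id_comp])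

end FactorizationData

lemma canMap_eta (D : FactorizationData C) {A X Y : C} (x : A ⟶ X) (f : X ⟶ Y) :
    D.eta x ≫ canMap D x f = D.eta (x ≫ f) :=
  (fill_spec D _ _ _ _ _).1

section Cones

variable [HasTerminal C] (D : FactorizationData C)

lemma eta_comp_imageCone {M₀ X Y : C} (f : X ⟶ Y) (m : M₀ ⟶ X) (x : ⊤_ C ⟶ X)
    (lam : M₀ ⟶ D.mid x) (hc : IsCone D m x lam) :
    D.eta (m ≫ f) ≫ imageCone D f m x lam hc = lam ≫ canMap D x f :=
  (fill_spec D _ _ _ _ _).1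

lemma imageCone_isCone {M₀ X Y : C} (f : X ⟶ Y) (m : M₀ ⟶ X) (x : ⊤_ C ⟶ X)
    (lam : M₀ ⟶ D.mid x) (hc : IsCone D m x lam) :
    IsCone D (D.refl (m ≫ f)) (x ≫ f) (imageCone D f m x lam hc) :=
  (fill_spec D _ _ _ _ _).2

lemma isColimiting_of_isIso {M₀ X : C} {m : M₀ ⟶ X} {x : ⊤_ C ⟶ X} {lam : M₀ ⟶ D.mid x}
    (hc : IsCone D m x lam) [IsIso lam] : IsColimiting D m x lam := by
  intro z mu hmu
  refine ⟨inv lam ≫ mu, ⟨?_, by simp⟩, fun θ hθ => by simp [← hθ.2]⟩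
  rw [Category.assoc, IsIso.inv_comp_eq, hmu, hc]

/-- Cones from `g` and from its reflection `↓g` correspond through `η_g`. -/
lemma IsColimiting.eta_comp {P X : C} {g : P ⟶ X} {x : ⊤_ C ⟶ X} {lam : D.mid g ⟶ D.mid x}
    (h : IsColimiting D (D.refl g) x lam) (hc : IsCone D (D.refl g) x lam) :
    IsColimiting D g x (D.eta g ≫ lam) := by
  intro z mu hmu
  have hsq : D.eta g ≫ D.refl g = mu ≫ D.refl z := by rw [D.fac, hmu]
  obtain ⟨h₁, h₂⟩ := fill_spec D (D.eta_mem g) (D.refl_mem z) mu (D.refl g) hsq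
  obtain ⟨θ, ⟨hθ₁, hθ₂⟩, huniq⟩ := h z _ h₂
  refine ⟨θ, ⟨hθ₁, by rw [Category.assoc, hθ₂, h₁]⟩, fun θ' hθ' => huniq θ' ⟨hθ'.1, ?_⟩⟩
  exact D.diag_ext (D.eta_mem g) (D.refl_mem z) (by rw [← Category.assoc, hθ'.2, h₁])
    (by rw [Category.assoc, hθ'.1, hc, h₂])

lemma IsColimiting.eq_id {M₀ X : C} {m : M₀ ⟶ X} {x : ⊤_ C ⟶ X} {lam : M₀ ⟶ D.mid x}
    (h : IsColimiting D m x lam) (hc : IsCone D m x lam) {θ : D.mid x ⟶ D.mid x}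
    (h₁ : θ ≫ D.refl x = D.refl x) (h₂ : lam ≫ θ = lam) : θ = 𝟙 _ :=
  (h x lam hc).unique ⟨h₁, h₂⟩ ⟨Category.id_comp _, Category.comp_id _⟩

lemma exists_preserved_colimit_of_mem_E {P X Y : C} (g : P ⟶ X) (f : X ⟶ Y)
    {e : ⊤_ C ⟶ P} (he : D.E e) :
    ∃ (x : ⊤_ C ⟶ X) (lam : P ⟶ D.mid x) (hc : IsCone D g x lam),
      IsColimiting D g x lam ∧
      IsColimiting D (D.refl (g ≫ f)) (x ≫ f) (imageCone D f g x lam hc) := by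
  have he' : D.E (e ≫ D.eta g) := D.E_comp he (D.eta_mem g)
  have hsq : (e ≫ D.eta g) ≫ D.refl g = D.eta (e ≫ g) ≫ D.refl (e ≫ g) := by
    rw [Category.assoc, D.fac, D.fac]
  obtain ⟨hψ₁, hψ₂⟩ := fill_spec D he' (D.refl_mem (e ≫ g)) _ _ hsq
  set ψ := fill D he' (D.refl_mem (e ≫ g)) _ _ hsq
  have : IsIso ψ := D.isIso_of_fac he' (D.refl_mem g) (D.eta_mem _) (D.refl_mem _) hψ₁ hψ₂
  have hc : IsCone D g (e ≫ g) (D.eta g ≫ ψ) := by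
    rw [IsCone, Category.assoc, hψ₂, D.fac]
  refine ⟨e ≫ g, D.eta g ≫ ψ, hc, (isColimiting_of_isIso D hψ₂).eta_comp D hψ₂, ?_⟩
  have hι := imageCone_isCone D f g _ _ hc
  have : IsIso (imageCone D f g _ _ hc) := by
    refine D.isIso_of_fac (D.E_comp he (D.eta_mem (g ≫ f))) (D.refl_mem _) (D.eta_mem _)
      (D.refl_mem _) ?_ hι
    simp only [Category.assoc, eta_comp_imageCone]
    rw [reassoc_of% hψ₁, canMap_eta]
  exact isColimiting_of_isIso D hι

lemma exists_mem_E_of_preserved_colimit {X Y : C} {f : X ⟶ Y} {y : ⊤_ C ⟶ Y}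
    [HasPullback f (D.refl y)] {x : ⊤_ C ⟶ X} {lam : pullback f (D.refl y) ⟶ D.mid x}
    (hc : IsCone D (pullback.fst f (D.refl y)) x lam)
    (hlam : IsColimiting D (pullback.fst f (D.refl y)) x lam)
    (himage : IsColimiting D (D.refl (pullback.fst f (D.refl y) ≫ f)) (x ≫ f)
      (imageCone D f (pullback.fst f (D.refl y)) x lam hc)) :
    ∃ e : ⊤_ C ⟶ pullback f (D.refl y), D.E e := by
  have hsq : D.eta (pullback.fst f (D.refl y) ≫ f) ≫ D.refl (pullback.fst f (D.refl y) ≫ f) =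
      pullback.snd f (D.refl y) ≫ D.refl y := by
    rw [D.fac, pullback.condition]
  obtain ⟨hσ₁, hσ₂⟩ := fill_spec D (D.eta_mem _) (D.refl_mem y) _ _ hsq
  obtain ⟨θ, ⟨hθ₁, hθ₂⟩, -⟩ := himage y _ hσ₂
  let k : D.mid x ⟶ pullback f (D.refl y) :=
    pullback.lift (D.refl x) (canMap D x f ≫ θ) (by rw [Category.assoc, hθ₁, canMap_comm])
  have hlam_k : lam ≫ k = 𝟙 _ := by
    apply pullback.hom_ext
    · rw [Category.assoc, pullback.lift_fst, hc, Category.id_comp]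
    · rw [Category.assoc, pullback.lift_snd, ← Category.assoc,
        ← eta_comp_imageCone D f _ x lam hc, Category.assoc, hθ₂, hσ₁, Category.id_comp]
  have hk_lam : k ≫ lam = 𝟙 _ :=
    hlam.eq_id D hc (by rw [Category.assoc, hc, pullback.lift_fst])
      (by rw [reassoc_of% hlam_k])
  have : IsIso k := ⟨lam, hk_lam, hlam_k⟩
  exact ⟨D.eta x ≫ k, D.E_comp (D.eta_mem x) (D.E_of_isIso k)⟩

end Cones

/-- given `f : X ⟶ Y` and a point `y : 1 ⟶ Y`, there is a universal displacement
from `f` to `y` (a point of the total of the pullback `Δ_f ν(y)` lying in `E`) iff the discrete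
space `Δ_f ν(y)` over `X` has a colimit which is preserved by `f` itself (the image cone
`∃_f lam` is also colimiting). -/
theorem universal_displacement_iff_preserved_colimit
    [HasFiniteLimits C] (D : FactorizationData C)
    {X Y : C} (f : X ⟶ Y) (y : ⊤_ C ⟶ Y) :
    (∃ e : ⊤_ C ⟶ pullback f (D.refl y), D.E e) ↔
      ∃ (x : ⊤_ C ⟶ X) (lam : pullback f (D.refl y) ⟶ D.mid x)
        (hc : IsCone D (pullback.fst f (D.refl y)) x lam),
        IsColimiting D (pullback.fst f (D.refl y)) x lam ∧
        IsColimiting D (D.refl (pullback.fst f (D.refl y) ≫ f)) (x ≫ f)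
          (imageCone D f (pullback.fst f (D.refl y)) x lam hc) := by
  constructor
  · rintro ⟨e, he⟩
    exact exists_preserved_colimit_of_mem_E D _ f he
  · rintro ⟨x, lam, hc, hlam, himage⟩
    exact exists_mem_E_of_preserved_colimit D hc hlam himage
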